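/- Let P ⊆ ℝⁿ be a compact polyhedron and v a vertex of P such that every vertex w adjacent to v (i.e., conv{v,w} is an edge of P) satisfies ⟨c,v⟩ ≤ ⟨c,w⟩. Then v minimizes x ↦ ⟨c,x⟩ over P. -/

import Mathlib

open Matrix Set
open scoped Classical

/-- A polyhedron in `ℝⁿ`: the solution set of a finite system of linear
inequalities `A x ≥ b`. -/
def IsPolyhedron {n : ℕ} (P : Set (Fin n → ℝ)) : Prop :=
  ∃ (m : ℕ) (A : Fin m → Fin n → ℝ) (b : Fin m → ℝ),
    P = {x | ∀ i, A i ⬝ᵥ x ≥ b i}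

/-- A face of `P`: the empty set or the set of minimizers of a linear
functional over `P`. -/
def IsFace {n : ℕ} (P F : Set (Fin n → ℝ)) : Prop :=
  F = ∅ ∨ ∃ c : Fin n → ℝ, F = {x ∈ P | ∀ y ∈ P, c ⬝ᵥ x ≤ c ⬝ᵥ y}

/-- Dimension of a polyhedron: dimension of the direction of its affine
hull, with the convention `pdim ∅ = -1`. -/
noncomputable def pdim {n : ℕ} (P : Set (Fin n → ℝ)) : ℤ :=
  if P = ∅ then -1 else (Module.finrank ℝ (vectorSpan ℝ P) : ℤ)


/-- A vertex of `P` is a point whose singleton is a face of `P`. -/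
def IsVertex {n : ℕ} (P : Set (Fin n → ℝ)) (v : Fin n → ℝ) : Prop :=
  IsFace P {v}

/-- Two points are adjacent vertices of `P` if they are distinct and the
segment between them is an edge (a 1-dimensional face) of `P`. -/
noncomputable def Adj {n : ℕ} (P : Set (Fin n → ℝ)) (v w : Fin n → ℝ) : Prop :=
  v ≠ w ∧ IsFace P (segment ℝ v w) ∧ pdim (segment ℝ v w) = 1

/-!
Let `d` expose the vertex `v` and let `C` be the cone of feasible directions at `v`, cut out by
the constraints that are tight at `v`. Every `x ∈ P` gives `x - v ∈ C`, and `d` is positive on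
`C \ {0}`, so the slice `B = {u ∈ C | d ⬝ᵥ u = 1}` is a compact convex base of `C`. For an extreme
point `u` of `B`, the constraints tight at `v` and vanishing on `u` cut out a face of `P` lying on
the ray `v + ℝ≥0 • u`; being compact and convex, it is a segment `[v, v + t • u]` with `t > 0`,
that is, an edge at `v`. Hence `0 ≤ c ⬝ᵥ u` at the extreme points of `B`, by Krein–Milman on all
of `B`, and therefore on `C ∋ x - v`.
-/

open Filter Topology

section Analysis

variable {E : Type*} [NormedAddCommGroup E] [NormedSpace ℝ E]

lemma exists_pos_mul_norm_le_of_cone [ProperSpace E] {K : Set E} (hK : IsClosed K)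
    (hsmul : ∀ r : ℝ, 0 ≤ r → ∀ u ∈ K, r • u ∈ K) {f : E → ℝ} (hlin : IsLinearMap ℝ f)
    (hcont : Continuous f) (hpos : ∀ u ∈ K, u ≠ 0 → 0 < f u) :
    ∃ δ > 0, ∀ u ∈ K, δ * ‖u‖ ≤ f u := by
  obtain ⟨δ, hδ, hδle⟩ := ((isCompact_sphere (0 : E) 1).inter_left hK).exists_forall_le'
    hcont.continuousOn fun u hu => hpos u hu.1 (ne_zero_of_mem_unit_sphere ⟨u, hu.2⟩)
  refine ⟨δ, hδ, fun u hu => ?_⟩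
  rcases eq_or_ne u 0 with rfl | hu0
  · simp [hlin.map_zero]
  · have hnorm : 0 < ‖u‖ := norm_pos_iff.2 hu0
    have := hδle (‖u‖⁻¹ • u) ⟨hsmul _ (inv_nonneg.2 hnorm.le) u hu, by simp [norm_smul, hu0]⟩
    rwa [hlin.map_smul, smul_eq_mul, inv_mul_eq_div, le_div_iff₀ hnorm] at this

lemma exists_eq_segment_of_subset_ray {F : Set E} {v u : E} (hF : IsCompact F)
    (hFconv : Convex ℝ F) (hv : v ∈ F) (hu : u ≠ 0)
    (hray : F ⊆ (fun t : ℝ => v + t • u) '' Ici 0) :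
    ∃ t : ℝ, 0 ≤ t ∧ F = segment ℝ v (v + t • u) := by
  set f : ℝ →ᵃ[ℝ] E := AffineMap.lineMap v (v + u)
  have hf : ∀ t, f t = v + t • u := fun t => by
    simp [f, AffineMap.lineMap_apply, add_comm]
  have hf_emb : IsClosedEmbedding f := by
    convert (Homeomorph.addLeft v).isClosedEmbedding.comp (isClosedEmbedding_smul_left (𝕜 := ℝ) hu)
      using 1
    ext t; simp [hf]
  set T := f ⁻¹' F
  have hT0 : (0 : ℝ) ∈ T := by simpa [T, hf] using hv
  have hT_nonneg : T ⊆ Ici 0 := fun t ht => by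
    obtain ⟨s, hs, hst⟩ := hray ht
    rw [hf, add_right_inj] at hst
    exact (smul_left_injective ℝ hu hst : s = t) ▸ hs
  have hTcompact : IsCompact T := hf_emb.isCompact_preimage hF
  have hT_Icc : T = Icc 0 (sSup T) := by
    have := eq_Icc_of_connected_compact
      ⟨⟨0, hT0⟩, (hFconv.affine_preimage f).isPreconnected⟩ hTcompact
    rwa [(IsLeast.csInf_eq ⟨hT0, hT_nonneg⟩ : sInf T = 0)] at this
  have ht : 0 ≤ sSup T := (hT_Icc ▸ hT0).2
  refine ⟨sSup T, ht, ?_⟩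
  calc F = f '' T := by
        refine (image_preimage_eq_of_subset fun x hx => ?_).symm
        obtain ⟨t, -, rfl⟩ := hray hx
        exact ⟨t, hf t⟩
    _ = f '' segment ℝ 0 (sSup T) := by rw [segment_eq_Icc ht, ← hT_Icc]
    _ = segment ℝ v (v + sSup T • u) := by rw [image_segment, hf, hf, zero_smul, add_zero]

lemma subset_of_extremePoints_subset [LocallyConvexSpace ℝ E] {K S : Set E} (hK : IsCompact K)
    (hKconv : Convex ℝ K) (hS : IsClosed S) (hSconv : Convex ℝ S) (h : extremePoints ℝ K ⊆ S) :
    K ⊆ S :=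
  closure_convexHull_extremePoints hK hKconv ▸ closure_minimal (convexHull_min h hSconv) hS

end Analysis

section

variable {n : ℕ}

lemma isLinearMap_dotProduct (d : Fin n → ℝ) : IsLinearMap ℝ (d ⬝ᵥ ·) :=
  ⟨dotProduct_add d, fun r x => dotProduct_smul r d x⟩

lemma continuous_dotProduct (d : Fin n → ℝ) : Continuous (d ⬝ᵥ ·) :=
  continuous_const.dotProduct continuous_id

lemma IsVertex.exists_dotProduct_lt {P : Set (Fin n → ℝ)} {v : Fin n → ℝ} (hv : IsVertex P v) :
    v ∈ P ∧ ∃ d : Fin n → ℝ, ∀ x ∈ P, x ≠ v → d ⬝ᵥ v < d ⬝ᵥ x := by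
  obtain ⟨d, hd⟩ := hv.resolve_left (singleton_ne_empty v)
  obtain ⟨hvP, hvmin⟩ := (Set.ext_iff.1 hd v).1 rfl
  exact ⟨hvP, d, fun x hx hxv => (hvmin x hx).lt_of_ne fun h =>
    hxv <| (Set.ext_iff.1 hd x).2 ⟨hx, fun y hy => h ▸ hvmin y hy⟩⟩

lemma IsFace.convex {P F : Set (Fin n → ℝ)} (hF : IsFace P F) (hP : Convex ℝ P) :
    Convex ℝ F := by
  obtain rfl | ⟨c, rfl⟩ := hF
  · exact convex_empty
  · show Convex ℝ (P ∩ {x | ∀ y ∈ P, c ⬝ᵥ x ≤ c ⬝ᵥ y})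
    simp only [ofPred_forall]
    exact hP.inter <| convex_iInter₂ fun y _ => convex_halfSpace_le (isLinearMap_dotProduct c) _

lemma IsFace.isClosed {P F : Set (Fin n → ℝ)} (hF : IsFace P F) (hP : IsClosed P) :
    IsClosed F := by
  obtain rfl | ⟨c, rfl⟩ := hF
  · exact isClosed_empty
  · show IsClosed (P ∩ {x | ∀ y ∈ P, c ⬝ᵥ x ≤ c ⬝ᵥ y})
    simp only [ofPred_forall]
    exact hP.inter <| isClosed_biInter fun y _ =>
      isClosed_le (continuous_dotProduct c) continuous_const

lemma pdim_segment {v w : Fin n → ℝ} (h : v ≠ w) : pdim (segment ℝ v w) = 1 := by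
  rw [pdim, if_neg (nonempty_of_mem (left_mem_segment ℝ v w)).ne_empty, vectorSpan_segment,
    finrank_span_singleton (vsub_ne_zero.2 h.symm)]
  rfl

section Polyhedron

variable {ι : Type*} (A : ι → Fin n → ℝ) (b : ι → ℝ)

def polyhedron : Set (Fin n → ℝ) := {x | ∀ i, b i ≤ A i ⬝ᵥ x}

def feasibleCone (x : Fin n → ℝ) : Set (Fin n → ℝ) :=
  polyhedron (fun i : {i // A i ⬝ᵥ x = b i} => A i) 0

def feasibleConeSlice (x d : Fin n → ℝ) : Set (Fin n → ℝ) :=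
  {u ∈ feasibleCone A b x | d ⬝ᵥ u = 1}

variable {A b} {x y z : Fin n → ℝ}

lemma mem_feasibleCone : y ∈ feasibleCone A b x ↔ ∀ i, A i ⬝ᵥ x = b i → 0 ≤ A i ⬝ᵥ y := by
  simp [feasibleCone, polyhedron]

lemma convex_polyhedron : Convex ℝ (polyhedron A b) := by
  simp only [polyhedron, ofPred_forall]
  exact convex_iInter fun i => convex_halfSpace_ge (isLinearMap_dotProduct (A i)) (b i)

lemma isClosed_polyhedron : IsClosed (polyhedron A b) := by
  simp only [polyhedron, ofPred_forall]
  exact isClosed_iInter fun i => isClosed_le continuous_const (continuous_dotProduct (A i))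

lemma sub_mem_feasibleCone (hz : z ∈ polyhedron A b) :
    z - x ∈ feasibleCone A b x :=
  mem_feasibleCone.2 fun i hi => by rw [dotProduct_sub, hi, sub_nonneg]; exact hz i

lemma smul_mem_feasibleCone {r : ℝ} (hr : 0 ≤ r) (hy : y ∈ feasibleCone A b x) :
    r • y ∈ feasibleCone A b x :=
  mem_feasibleCone.2 fun i hi => by
    rw [dotProduct_smul, smul_eq_mul]; exact mul_nonneg hr (mem_feasibleCone.1 hy i hi)

lemma eventually_add_smul_mem_polyhedron [Finite ι] (hx : x ∈ polyhedron A b)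
    (hy : y ∈ feasibleCone A b x) : ∀ᶠ t in 𝓝[>] (0 : ℝ), x + t • y ∈ polyhedron A b := by
  refine eventually_all.2 fun i => ?_
  simp only [dotProduct_add, dotProduct_smul, smul_eq_mul]
  rcases (hx i).eq_or_lt with h | h
  · filter_upwards [self_mem_nhdsWithin] with t (ht : 0 < t)
    have := mem_feasibleCone.1 hy i h.symm
    nlinarith
  · have : Tendsto (fun t => A i ⬝ᵥ x + t * A i ⬝ᵥ y) (𝓝[>] 0) (𝓝 (A i ⬝ᵥ x)) :=
      ((continuous_const.add (continuous_id.mul continuous_const)).tendsto' 0 _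
        (by simp)).mono_left nhdsWithin_le_nhds
    exact (this.eventually (lt_mem_nhds h)).mono fun _ => le_of_lt

lemma isFace_setOf_tight (J : Finset ι) :
    IsFace (polyhedron A b) {x ∈ polyhedron A b | ∀ i ∈ J, A i ⬝ᵥ x = b i} := by
  rcases eq_empty_or_nonempty {x ∈ polyhedron A b | ∀ i ∈ J, A i ⬝ᵥ x = b i} with
    h | ⟨x₀, hx₀, hx₀J⟩
  · exact Or.inl h
  have tight_iff : ∀ x ∈ polyhedron A b,
      (∀ i ∈ J, A i ⬝ᵥ x = b i) ↔ (∑ i ∈ J, A i) ⬝ᵥ x = ∑ i ∈ J, b i := fun x hx => by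
    rw [sum_dotProduct, eq_comm, Finset.sum_eq_sum_iff_of_le fun i _ => hx i]
    exact forall₂_congr fun _ _ => eq_comm
  have sum_le : ∀ x ∈ polyhedron A b, ∑ i ∈ J, b i ≤ (∑ i ∈ J, A i) ⬝ᵥ x := fun x hx => by
    rw [sum_dotProduct]; exact Finset.sum_le_sum fun i _ => hx i
  refine Or.inr ⟨∑ i ∈ J, A i, Set.ext fun x => ⟨?_, ?_⟩⟩
  · rintro ⟨hx, hxJ⟩
    exact ⟨hx, fun y hy => (tight_iff x hx).1 hxJ ▸ sum_le y hy⟩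
  · rintro ⟨hx, hmin⟩
    refine ⟨hx, (tight_iff x hx).2 (le_antisymm ?_ (sum_le x hx))⟩
    exact (tight_iff x₀ hx₀).1 hx₀J ▸ hmin x₀ hx₀

end Polyhedron

section VertexCone

variable {ι : Type*} {A : ι → Fin n → ℝ} {b : ι → ℝ} {v d : Fin n → ℝ}

lemma dotProduct_pos_of_mem_feasibleCone [Finite ι] (hv : v ∈ polyhedron A b)
    (hd : ∀ x ∈ polyhedron A b, x ≠ v → d ⬝ᵥ v < d ⬝ᵥ x) {z : Fin n → ℝ}
    (hz : z ∈ feasibleCone A b v) (hz0 : z ≠ 0) : 0 < d ⬝ᵥ z := by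
  obtain ⟨t, htP, ht⟩ :=
    ((eventually_add_smul_mem_polyhedron hv hz).and self_mem_nhdsWithin).exists
  have hlt := hd _ htP (by simpa [(ht : 0 < t).ne'] using hz0)
  rw [dotProduct_add, dotProduct_smul, smul_eq_mul, lt_add_iff_pos_right] at hlt
  exact pos_of_mul_pos_right hlt ht.le

lemma isCompact_feasibleConeSlice (hpos : ∀ z ∈ feasibleCone A b v, z ≠ 0 → 0 < d ⬝ᵥ z) :
    IsCompact (feasibleConeSlice A b v d) := by
  obtain ⟨δ, hδ, hδle⟩ := exists_pos_mul_norm_le_of_cone isClosed_polyhedron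
    (fun r hr u hu => smul_mem_feasibleCone hr hu) (isLinearMap_dotProduct d)
    (continuous_dotProduct d) hpos
  refine Metric.isCompact_of_isClosed_isBounded
    (isClosed_polyhedron.inter (isClosed_eq (continuous_dotProduct d) continuous_const))
    ((Metric.isBounded_closedBall (x := 0) (r := δ⁻¹)).subset fun u ⟨hu, hdu⟩ => ?_)
  rw [Metric.mem_closedBall, dist_zero_right, ← mul_one δ⁻¹, le_inv_mul_iff₀ hδ]
  exact hdu ▸ hδle u hu

lemma convex_feasibleConeSlice : Convex ℝ (feasibleConeSlice A b v d) :=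
  convex_polyhedron.inter (convex_hyperplane (isLinearMap_dotProduct d) 1)

lemma eq_smul_of_mem_extremePoints_feasibleConeSlice [Finite ι] {u y : Fin n → ℝ}
    (hu : u ∈ extremePoints ℝ (feasibleConeSlice A b v d))
    (hy : ∀ i, A i ⬝ᵥ v = b i → A i ⬝ᵥ u = 0 → A i ⬝ᵥ y = 0) : ∃ r : ℝ, y = r • u := by
  obtain ⟨⟨huC, hdu⟩, hext⟩ := hu
  refine ⟨d ⬝ᵥ y, sub_eq_zero.1 ?_⟩
  set z := y - (d ⬝ᵥ y) • u
  have hdz : d ⬝ᵥ z = 0 := by simp [z, dotProduct_sub, dotProduct_smul, hdu]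
  have hz : ∀ s : ℝ, s • z ∈ feasibleCone (fun i : {i // A i ⬝ᵥ v = b i} => A i) 0 u :=
    fun s => mem_feasibleCone.2 fun ⟨i, hi⟩ hiu => by
      simp only [Pi.zero_apply] at hiu
      simp [z, dotProduct_smul, dotProduct_sub, hy i hi hiu, hiu]
  obtain ⟨t, ⟨hplus, hminus⟩, ht⟩ := ((eventually_add_smul_mem_polyhedron huC (hz 1)).and
    (eventually_add_smul_mem_polyhedron huC (hz (-1)))).and self_mem_nhdsWithin |>.exists
  rw [one_smul] at hplus
  rw [neg_one_smul, smul_neg, ← sub_eq_add_neg] at hminus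
  have hmid := hext (x₁ := u + t • z) (x₂ := u - t • z)
    ⟨hplus, by simp [dotProduct_add, dotProduct_smul, hdz, hdu]⟩
    ⟨hminus, by simp [dotProduct_sub, dotProduct_smul, hdz, hdu]⟩
    (mem_openSegment_add_sub u (t • z))
  exact (smul_eq_zero.1 (add_eq_left.1 hmid)).resolve_left (ht : 0 < t).ne'

end VertexCone

lemma exists_adj_of_mem_extremePoints_feasibleConeSlice {ι : Type*} [Finite ι]
    {A : ι → Fin n → ℝ} {b : ι → ℝ} {v d u : Fin n → ℝ} (hc : IsCompact (polyhedron A b))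
    (hv : v ∈ polyhedron A b) (hd : ∀ x ∈ polyhedron A b, x ≠ v → d ⬝ᵥ v < d ⬝ᵥ x)
    (hu : u ∈ extremePoints ℝ (feasibleConeSlice A b v d)) :
    ∃ t : ℝ, 0 < t ∧ Adj (polyhedron A b) v (v + t • u) := by
  have := Fintype.ofFinite ι
  obtain ⟨huC, hdu⟩ := hu.1
  have hu0 : u ≠ 0 := by rintro rfl; simp at hdu
  set J := Finset.univ.filter fun i => A i ⬝ᵥ v = b i ∧ A i ⬝ᵥ u = 0
  set F := {x ∈ polyhedron A b | ∀ i ∈ J, A i ⬝ᵥ x = b i}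
  have hF : IsFace (polyhedron A b) F := isFace_setOf_tight J
  have hvF : v ∈ F := ⟨hv, fun i hi => (Finset.mem_filter.1 hi).2.1⟩
  have hray : F ⊆ (fun t : ℝ => v + t • u) '' Ici 0 := by
    rintro x ⟨hx, hxJ⟩
    obtain ⟨r, hr⟩ := eq_smul_of_mem_extremePoints_feasibleConeSlice hu (y := x - v)
      fun i hiv hiu => by
        rw [dotProduct_sub, hxJ i (by simp [J, hiv, hiu]), hiv, sub_self]
    have hdr : d ⬝ᵥ (x - v) = r := by rw [hr, dotProduct_smul, hdu, smul_eq_mul, mul_one]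
    refine ⟨r, hdr ▸ ?_, by simp only [← hr, add_sub_cancel]⟩
    rcases eq_or_ne x v with rfl | hxv
    · simp
    · exact (dotProduct_pos_of_mem_feasibleCone hv hd (sub_mem_feasibleCone hx)
        (sub_ne_zero.2 hxv)).le
  obtain ⟨t, ht, hFseg⟩ := exists_eq_segment_of_subset_ray
    (hc.of_isClosed_subset (hF.isClosed hc.isClosed) (sep_subset _ _))
    (hF.convex convex_polyhedron) hvF hu0 hray
  obtain ⟨ε, hεP, hε⟩ :=
    ((eventually_add_smul_mem_polyhedron hv huC).and self_mem_nhdsWithin).exists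
  have hεF : v + ε • u ∈ F := ⟨hεP, fun i hi => by
    obtain ⟨-, hiv, hiu⟩ := Finset.mem_filter.1 hi
    rw [dotProduct_add, dotProduct_smul, hiv, hiu, smul_zero, add_zero]⟩
  have ht0 : t ≠ 0 := by
    rintro rfl
    rw [hFseg, zero_smul, add_zero, segment_same, mem_singleton_iff, add_eq_left,
      smul_eq_zero] at hεF
    exact hεF.elim hε.ne' hu0
  have hvw : v ≠ v + t • u := by simp [ht0, hu0]
  exact ⟨t, ht.lt_of_ne' ht0, hvw, hFseg ▸ hF, pdim_segment hvw⟩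

end

theorem adj_argmin {n : ℕ} (P : Set (Fin n → ℝ)) (hP : IsPolyhedron P)
    (hc : IsCompact P) (c : Fin n → ℝ) (v : Fin n → ℝ) (hv : IsVertex P v)
    (hmin : ∀ w, Adj P v w → c ⬝ᵥ v ≤ c ⬝ᵥ w) :
    ∀ x ∈ P, c ⬝ᵥ v ≤ c ⬝ᵥ x := by
  obtain ⟨m, A, b, rfl⟩ := hP
  obtain ⟨hvP, d, hd⟩ := hv.exists_dotProduct_lt
  have hpos := fun z => dotProduct_pos_of_mem_feasibleCone (z := z) hvP hd
  have hslice : feasibleConeSlice A b v d ⊆ {u | 0 ≤ c ⬝ᵥ u} :=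
    subset_of_extremePoints_subset (isCompact_feasibleConeSlice hpos) convex_feasibleConeSlice
      (isClosed_le continuous_const (continuous_dotProduct c))
      (convex_halfSpace_ge (isLinearMap_dotProduct c) 0) fun u hu => by
        obtain ⟨t, ht, hadj⟩ := exists_adj_of_mem_extremePoints_feasibleConeSlice hc hvP hd hu
        have := hmin _ hadj
        rw [dotProduct_add, dotProduct_smul, smul_eq_mul, le_add_iff_nonneg_right] at this
        exact nonneg_of_mul_nonneg_right this ht
  intro x hx
  rcases eq_or_ne x v with rfl | hxv
  · exact le_rfl
  have hxC := sub_mem_feasibleCone (x := v) hx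
  have hdx := hpos _ hxC (sub_ne_zero.2 hxv)
  have := hslice ⟨smul_mem_feasibleCone (inv_nonneg.2 hdx.le) hxC,
    by rw [dotProduct_smul, smul_eq_mul, inv_mul_cancel₀ hdx.ne']⟩
  rw [mem_ofPred_eq, dotProduct_smul, smul_eq_mul] at this
  exact sub_nonneg.1 (dotProduct_sub c x v ▸ nonneg_of_mul_nonneg_right this (inv_pos.2 hdx))
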